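/- arXiv:2601.05965 — 4 statements merged into one kernel-verified Lean document; each statement's English description precedes it below -/
import Mathlib

section
/- If x ∈ (0, 1/4) and n ≥ 2 is an integer, then (x + 2(1-x)x^n)^n < 2x^n. -/
lemma aux_four_mul_le (n : ℕ) (h : 3 ≤ n) : 4 * n ≤ 4 ^ (n - 1) := by
  induction n with
  | zero => omega
  | succ m ih =>
    rcases Nat.lt_or_ge m 3 with hm | hm
    · interval_cases m <;> simp_all <;> norm_num
    · have := ih (by omega)
      have : 4 ^ (m - 1) * 4 = 4 ^ m := by
        rw [← pow_succ]
        congr 1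
        omega
      simp only [Nat.add_sub_cancel]
      nlinarith [ih (by omega)]

/-- If x ∈ (0, 1/4) and n ≥ 2 is an integer, then (x + 2(1-x)x^n)^n < 2x^n. -/
theorem key_polynomial_inequality (x : ℝ) (hx0 : 0 < x) (hx1 : x < 1/4)
    (n : ℕ) (hn : 2 ≤ n) :
    (x + 2 * (1 - x) * x ^ n) ^ n < 2 * x ^ n := by
  have hx1' : x < 1 := by linarith
  have hxn : 0 < x ^ n := pow_pos hx0 n
  rcases eq_or_lt_of_le hn with h2 | h3
  · -- n = 2
    subst h2
    have hg1 : 1 + 2*x - 2*x^2 < 11/8 := by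
      nlinarith [mul_pos (show (0:ℝ) < 1/4 - x by linarith) (show (0:ℝ) < 3/4 - x by linarith)]
    have hg0 : (0:ℝ) < 1 + 2*x - 2*x^2 := by nlinarith [sq_nonneg x]
    have hg : (1 + 2*x - 2*x^2)^2 < 2 := by nlinarith [hg1, hg0]
    have he : (x + 2 * (1 - x) * x ^ 2) ^ 2 = x^2 * (1 + 2*x - 2*x^2)^2 := by ring
    rw [he]
    nlinarith [pow_pos hx0 2]
  · have hn3 : 3 ≤ n := h3
    set t : ℝ := 2 * x ^ (n - 1) with ht
    have hxn1 : 0 < x ^ (n - 1) := pow_pos hx0 _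
    have ht0 : 0 < t := by positivity
    -- bound on n * t
    have hcast : (4 : ℝ) * n ≤ 4 ^ (n - 1) := by
      exact_mod_cast aux_four_mul_le n hn3
    have hx4 : x ^ (n - 1) < (1/4) ^ (n - 1) := by
      apply pow_lt_pow_left₀ hx1 (le_of_lt hx0)
      omega
    have h4pos : (0:ℝ) < 4 ^ (n - 1) := by positivity
    have hnt : (n : ℝ) * t < 1/2 := by
      have h14 : ((1:ℝ)/4) ^ (n - 1) = 1 / 4 ^ (n - 1) := by
        rw [div_pow]; norm_num
      have hn0 : (0:ℝ) < n := by positivity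
      have : (n : ℝ) * t < (n : ℝ) * (2 * (1 / 4 ^ (n-1))) := by
        rw [ht]
        apply mul_lt_mul_of_pos_left _ hn0
        rw [← h14]
        linarith
      have h2 : (n : ℝ) * (2 * (1 / 4 ^ (n-1))) ≤ 1/2 := by
        rw [show (n:ℝ) * (2 * (1 / 4 ^ (n-1))) = (2*n)/4^(n-1) by ring,
          div_le_div_iff₀ h4pos (by norm_num : (0:ℝ) < 2)]
        linarith
      linarith
    have hn1 : (1:ℝ) ≤ n := by exact_mod_cast Nat.one_le_of_lt h3
    have htlt : t < 1/2 := by nlinarith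
    -- Bernoulli: (1 - t)^n ≥ 1 - n t
    have hbern : 1 - (n : ℝ) * t ≤ (1 - t) ^ n := by
      have := one_add_mul_le_pow (a := -t) (by linarith) n
      calc 1 - (n:ℝ) * t = 1 + n * (-t) := by ring
        _ ≤ (1 + (-t)) ^ n := this
        _ = (1 - t) ^ n := by ring_nf
    have h1t : (0:ℝ) ≤ 1 + t := by linarith
    have hpowpos : (0:ℝ) < (1 + t) ^ n := pow_pos (by linarith) n
    have hprod : (1 + t) ^ n * (1 - t) ^ n ≤ 1 := by
      rw [← mul_pow]
      apply pow_le_one₀ (by nlinarith) (by nlinarith)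
    have hkey : (1 + t) ^ n < 2 := by
      have h1 : (1 + t) ^ n * (1 - (n:ℝ) * t) ≤ 1 := by
        calc (1 + t) ^ n * (1 - (n:ℝ) * t) ≤ (1 + t) ^ n * (1 - t) ^ n :=
              mul_le_mul_of_nonneg_left hbern (le_of_lt hpowpos)
          _ ≤ 1 := hprod
      nlinarith
    -- base < x * (1 + t)
    have hbase : x + 2 * (1 - x) * x ^ n < x * (1 + t) := by
      have hxpow : x ^ n = x * x ^ (n - 1) := by
        rw [← pow_succ']
        congr 1
        omega
      rw [ht, hxpow]
      nlinarith [mul_pos hx0 hxn1]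
    have hbase0 : 0 ≤ x + 2 * (1 - x) * x ^ n := by nlinarith
    calc (x + 2 * (1 - x) * x ^ n) ^ n < (x * (1 + t)) ^ n := by
          apply pow_lt_pow_left₀ hbase hbase0
          omega
      _ = x ^ n * (1 + t) ^ n := by rw [mul_pow]
      _ < x ^ n * 2 := by exact mul_lt_mul_of_pos_left hkey hxn
      _ = 2 * x ^ n := by ring
end

section
/- Let n ≥ 2 and x ∈ (0, 1/4). The extinction probability of a Galton–Watson branching process with offspring distribution Bin(n, 1-x) is strictly less than 2x^n. -/
/-! With `G z = (x + (1 - x) z)^n` we have `G 0 = x^n > 0`, and `G (2x^n) < 2x^n`, so by the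
intermediate value theorem `G` has a fixed point in `(0, 2x^n)`. Factoring out `x^n`, the inequality
`G (2x^n) < 2x^n` becomes `(1 + t)^n < 2` with `t = 2(1 - x)x^(n-1)`. For `n ≥ 3` this follows from
`(1 + t)^n ≤ exp (n t) ≤ exp (1/2)`, since `x < 1/4` makes `n t` tiny; for `n = 2` it is a
direct computation. -/

open Set

theorem sInf_fixedPoints_lt {f : ℝ → ℝ} {b : ℝ} (hb : 0 ≤ b) (hf : ContinuousOn f (Icc 0 b))
    (hf0 : 0 ≤ f 0) (hfb : f b < b) : sInf {z : ℝ | 0 ≤ z ∧ f z = z} < b := by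
  have hg : ContinuousOn (fun z => f z - z) (Icc 0 b) := hf.sub continuousOn_id
  obtain ⟨c, hc, hfc⟩ : ∃ c ∈ Icc 0 b, f c - c = 0 :=
    intermediate_value_Icc' hb hg ⟨by linarith, by simpa using hf0⟩
  have hcb : c < b := hc.2.lt_of_ne (by rintro rfl; linarith)
  have hbdd : BddBelow {z : ℝ | 0 ≤ z ∧ f z = z} := ⟨0, fun z hz => hz.1⟩
  exact (csInf_le hbdd ⟨hc.1, by linarith⟩).trans_lt hcb

theorem Real.exp_half_lt_two : Real.exp (1 / 2) < 2 := by
  have h : Real.exp (1 / 2) * Real.exp (1 / 2) = Real.exp 1 := by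
    rw [← Real.exp_add]; norm_num
  nlinarith [Real.exp_one_lt_d9, Real.exp_pos (1 / 2)]

theorem one_add_pow_lt_two {t : ℝ} {n : ℕ} (ht : -1 ≤ t) (hnt : n * t ≤ 1 / 2) :
    (1 + t) ^ n < 2 :=
  calc (1 + t) ^ n ≤ Real.exp t ^ n := by
        gcongr
        · linarith
        · linarith [Real.add_one_le_exp t]
    _ = Real.exp (n * t) := by rw [← Real.exp_nat_mul]
    _ ≤ Real.exp (1 / 2) := Real.exp_le_exp.mpr hnt
    _ < 2 := Real.exp_half_lt_two

theorem four_mul_succ_le_four_pow {m : ℕ} (hm : 2 ≤ m) : 4 * (m + 1) ≤ 4 ^ m := by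
  induction m, hm using Nat.le_induction with
  | base => norm_num
  | succ k _ ih => rw [pow_succ]; omega

theorem one_add_two_mul_pow_pow_lt_two {m : ℕ} (hm : 1 ≤ m) {x : ℝ} (hx0 : 0 < x)
    (hx1 : x < 1 / 4) : (1 + 2 * (1 - x) * x ^ m) ^ (m + 1) < 2 := by
  obtain rfl | hm2 := hm.eq_or_lt
  · have ht : 2 * (1 - x) * x < 3 / 8 := by nlinarith
    have ht0 : 0 < 2 * (1 - x) * x := by nlinarith
    rw [pow_one]
    generalize 2 * (1 - x) * x = t at ht ht0 ⊢
    norm_num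
    nlinarith
  apply one_add_pow_lt_two (by nlinarith [pow_pos hx0 m])
  have hcount : (4 : ℝ) * (m + 1) ≤ 4 ^ m := by exact_mod_cast four_mul_succ_le_four_pow hm2
  calc ((m + 1 : ℕ) : ℝ) * (2 * (1 - x) * x ^ m) ≤ (m + 1) * (2 * (1 / 4) ^ m) := by
        push_cast
        gcongr
        linarith
    _ ≤ 1 / 2 := by rw [one_div_pow]; field_simp; linarith

/-- The extinction probability of a Galton–Watson branching process with offspring
distribution `Bin(n, 1-x)` — which, by the standard fixed-point characterisation, is
the smallest non-negative fixed point of its probability generating function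
`G(z) = (x + (1-x)z)^n` — is strictly less than `2x^n` whenever `x ∈ (0, 1/4)` and
`n ≥ 2`. -/
theorem extinction_prob_binomial_lt (n : ℕ) (hn : 2 ≤ n)
    (x : ℝ) (hx0 : 0 < x) (hx1 : x < 1/4) :
    sInf {z : ℝ | 0 ≤ z ∧ (x + (1 - x) * z) ^ n = z} < 2 * x ^ n := by
  obtain ⟨m, rfl⟩ : ∃ m, n = m + 1 := ⟨n - 1, by omega⟩
  have hgrowth := one_add_two_mul_pow_pow_lt_two (m := m) (by omega) hx0 hx1
  refine sInf_fixedPoints_lt (by positivity) (by fun_prop) (by simp only [mul_zero, add_zero]; positivity) ?_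
  calc (x + (1 - x) * (2 * x ^ (m + 1))) ^ (m + 1)
      = x ^ (m + 1) * (1 + 2 * (1 - x) * x ^ m) ^ (m + 1) := by rw [← mul_pow]; ring
    _ < x ^ (m + 1) * 2 := by gcongr
    _ = 2 * x ^ (m + 1) := mul_comm _ _
end

section
/- Fix r ≥ 2 and k ≥ 1. Consider the random directed graph on [k]² in which, for each row and each column (i.e., each set of k points agreeing in one coordinate), one point of that line is chosen independently and uniformly at random as its winner, and there is an edge from a point to the winner of each of its two lines. The expected number of directed cycles of length 2r (alternating between horizontal and vertical steps, with r distinct x-coordinates and r distinct y-coordinates) equals (k(k-1)⋯(k-r+1))² / (r·k^(2r)), which is at most 1/r. -/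
/-!
A pair of injective sequences `x, y : Fin r → [k]` is a cycle of a given winner
configuration exactly when the `r` rows `y i` and the `r` columns `x (i + 1)` have the
prescribed winners; the other `k - r` rows and `k - r` columns are free. Counting pairs
(configuration, sequence pair) both ways gives `∑_w #cycles(w) = (k)_r² · k^(2(k - r))`,
where `(k)_r = k(k-1)⋯(k-r+1)`, so the expectation is `(k)_r² / (r · k^(2r))`, the factor `r`
accounting for the rotations of a cycle. The bound is `(k)_r ≤ k^r`.
-/

open Finset Function Fintype

section PrescribedValues

variable {ι α β : Type*} [Fintype ι] [Fintype α] [DecidableEq α] [Fintype β] [DecidableEq β]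

theorem card_filter_forall_apply_eq {e : ι → α} (he : Injective e) (c : ι → β) :
    #{f : α → β | ∀ i, f (e i) = c i} = card β ^ (card α - card ι) := by
  have hpi : ({f : α → β | ∀ i, f (e i) = c i} : Finset _) =
      piFinset fun a => {b | ∀ i, e i = a → b = c i} := by
    ext f
    simp only [mem_filter, mem_univ, true_and, mem_piFinset]
    exact ⟨fun h a i hi => hi ▸ h i, fun h i => h _ i rfl⟩
  have hfiber (a : α) : #{b : β | ∀ i, e i = a → b = c i} =
      if a ∈ univ.image e then 1 else card β := by
    split_ifs with ha
    · obtain ⟨i, -, rfl⟩ := mem_image.mp ha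
      rw [card_eq_one]
      exact ⟨c i, by ext b; simp [he.eq_iff]⟩
    · have : ∀ i, e i ≠ a := fun i hi => ha (mem_image.mpr ⟨i, mem_univ _, hi⟩)
      simp [this]
  rw [hpi, card_piFinset, prod_congr rfl fun a _ => hfiber a, prod_ite, prod_const_one, one_mul,
    prod_const, filter_not, filter_mem_eq_inter, univ_inter, ← compl_eq_univ_sdiff, card_compl,
    card_image_of_injective _ he, card_univ]

theorem card_filter_injective :
    #{f : α → β | Injective f} = (card β).descFactorial (card α) := by
  rw [← card_embedding_eq, ← Fintype.card_subtype]
  exact card_congr (Equiv.subtypeInjectiveEquivEmbedding α β)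

end PrescribedValues

section WinnerCycles

variable {α β : Type*} [Fintype α] [DecidableEq α] [Fintype β] [DecidableEq β] {r : ℕ}

theorem card_filter_injective_pair :
    #{p : (Fin r → α) × (Fin r → β) | Injective p.1 ∧ Injective p.2} =
      (card α).descFactorial r * (card β).descFactorial r := by
  rw [← univ_product_univ, filter_product, card_product, card_filter_injective,
    card_filter_injective, Fintype.card_fin]

variable [NeZero r]

/-- `w.1 y` is the winner of row `y` and `w.2 x` that of column `x`; the cycle runs
`(x i, y i) → (x (i + 1), y i) → (x (i + 1), y (i + 1))`. -/
def FollowsWinners (w : (β → α) × (α → β)) (x : Fin r → α) (y : Fin r → β) : Prop :=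
  ∀ i, w.1 (y i) = x (i + 1) ∧ w.2 (x (i + 1)) = y (i + 1)

instance (w : (β → α) × (α → β)) (x : Fin r → α) (y : Fin r → β) :
    Decidable (FollowsWinners w x y) := by
  unfold FollowsWinners; infer_instance

theorem card_filter_followsWinners {x : Fin r → α} {y : Fin r → β} (hx : Injective x)
    (hy : Injective y) :
    #{w | FollowsWinners w x y} = card α ^ (card β - r) * card β ^ (card α - r) := by
  have hprod : univ.filter (fun w => FollowsWinners w x y) =
      univ.filter (fun f : β → α => ∀ i, f (y i) = x (i + 1)) ×ˢ
        univ.filter (fun g : α → β => ∀ i, g (x (i + 1)) = y (i + 1)) := by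
    rw [← filter_product, univ_product_univ]
    simp only [FollowsWinners, forall_and]
  have hrows := card_filter_forall_apply_eq (α := β) (β := α) hy fun i => x (i + 1)
  have hcols := card_filter_forall_apply_eq (e := fun i => x (i + 1)) (β := β)
    (hx.comp (add_left_injective 1)) fun i => y (i + 1)
  rw [Fintype.card_fin] at hrows hcols
  rw [hprod, card_product]
  -- the two sides decide `∀ i : Fin r, _` by different (propositionally equal) instances
  convert congrArg₂ (· * ·) hrows hcols using 4

theorem sum_card_filter_followsWinners :
    ∑ w : (β → α) × (α → β),
        #{p : (Fin r → α) × (Fin r → β) | Injective p.1 ∧ Injective p.2 ∧ FollowsWinners w p.1 p.2} =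
      (card α).descFactorial r * (card β).descFactorial r *
        (card α ^ (card β - r) * card β ^ (card α - r)) := by
  let injPairs := univ.filter fun p : (Fin r → α) × (Fin r → β) => Injective p.1 ∧ Injective p.2
  calc ∑ w : (β → α) × (α → β),
        #{p : (Fin r → α) × (Fin r → β) | Injective p.1 ∧ Injective p.2 ∧ FollowsWinners w p.1 p.2}
      = ∑ w, #(injPairs.bipartiteAbove (fun w p => FollowsWinners w p.1 p.2) w) := by
        simp only [bipartiteAbove, injPairs, filter_filter, and_assoc]
    _ = ∑ p ∈ injPairs, #(univ.bipartiteBelow (fun w p => FollowsWinners w p.1 p.2) p) :=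
        sum_card_bipartiteAbove_eq_sum_card_bipartiteBelow _
    _ = ∑ p ∈ injPairs, card α ^ (card β - r) * card β ^ (card α - r) := by
        refine sum_congr rfl fun p hp => ?_
        obtain ⟨hx, hy⟩ := (mem_filter.mp hp).2
        exact card_filter_followsWinners hx hy
    _ = _ := by rw [sum_const, smul_eq_mul, card_filter_injective_pair]

end WinnerCycles

theorem Nat.cast_descFactorial_eq_prod_range {R : Type*} [CommRing R] (n k : ℕ) :
    (n.descFactorial k : R) = ∏ i ∈ range k, ((n : R) - i) := by
  rw [← descPochhammer_eval_eq_descFactorial, descPochhammer_eval_eq_prod_range]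

theorem Nat.descFactorial_mul_pow_sub_div_pow {K : Type*} [Field K] [CharZero K] (k r : ℕ) :
    (k.descFactorial r * (k : K) ^ (k - r)) / (k : K) ^ k = k.descFactorial r / (k : K) ^ r := by
  rcases lt_or_ge k r with hkr | hrk
  · simp [Nat.descFactorial_eq_zero_iff_lt.mpr hkr]
  · have hpow : (k : K) ^ (k - r) ≠ 0 := by
      rcases eq_or_ne k 0 with rfl | hk
      · simp
      · exact pow_ne_zero _ (Nat.cast_ne_zero.mpr hk)
    have hsplit : (k : K) ^ k = (k : K) ^ r * (k : K) ^ (k - r) := by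
      rw [← pow_add, Nat.add_sub_cancel' hrk]
    rw [hsplit, mul_div_mul_right _ _ hpow]

theorem Nat.descFactorial_sq_div_le (k r : ℕ) :
    (k.descFactorial r : ℝ) ^ 2 / (r * (k : ℝ) ^ (2 * r)) ≤ 1 / r := by
  have hle : (k.descFactorial r : ℝ) ^ 2 ≤ (k : ℝ) ^ (2 * r) := by
    rw [mul_comm, pow_mul]
    exact_mod_cast Nat.pow_le_pow_left (Nat.descFactorial_le_pow k r) 2
  rw [mul_comm, ← div_div]
  exact div_le_div_of_nonneg_right (div_le_one_of_le₀ hle (by positivity)) (by positivity)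

theorem expected_cycles_length_2r_general (k r : ℕ) [NeZero r] :
    (∑ w : (Fin k → Fin k) × (Fin k → Fin k),
        (Nat.card {p : (Fin r → Fin k) × (Fin r → Fin k) //
            Function.Injective p.1 ∧ Function.Injective p.2 ∧
            ∀ i : Fin r, w.1 (p.2 i) = p.1 (i + 1) ∧ w.2 (p.1 (i + 1)) = p.2 (i + 1)} : ℝ)
          / r) /
        (Nat.card ((Fin k → Fin k) × (Fin k → Fin k)) : ℝ) =
      (∏ i ∈ Finset.range r, ((k : ℝ) - i)) ^ 2 / (r * (k : ℝ) ^ (2 * r)) ∧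
    (∏ i ∈ Finset.range r, ((k : ℝ) - i)) ^ 2 / (r * (k : ℝ) ^ (2 * r)) ≤ 1 / r := by
  have hcycles : ∑ w : (Fin k → Fin k) × (Fin k → Fin k),
      (Nat.card {p : (Fin r → Fin k) × (Fin r → Fin k) //
          Injective p.1 ∧ Injective p.2 ∧ FollowsWinners w p.1 p.2} : ℝ) =
        (k.descFactorial r * (k : ℝ) ^ (k - r)) ^ 2 := by
    have := sum_card_filter_followsWinners (α := Fin k) (β := Fin k) (r := r)
    simp only [Nat.card_eq_fintype_card, Fintype.card_subtype, Fintype.card_fin] at this ⊢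
    exact_mod_cast this.trans (by ring)
  have hspace : (Nat.card ((Fin k → Fin k) × (Fin k → Fin k)) : ℝ) = ((k : ℝ) ^ k) ^ 2 := by
    simp [Nat.card_eq_fintype_card, sq]
  rw [← Nat.cast_descFactorial_eq_prod_range]
  constructor
  · simp only [FollowsWinners] at hcycles
    rw [← sum_div, hcycles, hspace]
    calc (k.descFactorial r * (k : ℝ) ^ (k - r)) ^ 2 / r / ((k : ℝ) ^ k) ^ 2
        = ((k.descFactorial r * (k : ℝ) ^ (k - r)) / (k : ℝ) ^ k) ^ 2 / r := by ring
      _ = (k.descFactorial r / (k : ℝ) ^ r) ^ 2 / r := by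
        rw [Nat.descFactorial_mul_pow_sub_div_pow]
      _ = _ := by ring
  · exact Nat.descFactorial_sq_div_le k r

/-- Random directed graph on `[k]²`: each row `y` picks a uniform winner `w.1 y`
(an `x`-coordinate) and each column `x` picks a uniform winner `w.2 x`
(a `y`-coordinate), all `2k` choices independent and uniform; equivalently, the
sample space is all pairs `w : (Fin k → Fin k) × (Fin k → Fin k)` with the uniform
measure.  A directed cycle of length `2r` alternating horizontal/vertical steps
corresponds to a pair of injective sequences `x y : Fin r → Fin k` with
`w.1 (y i) = x (i+1)` and `w.2 (x (i+1)) = y (i+1)` for all `i` (cyclically); each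
cycle is counted by exactly `r` such sequence pairs (cyclic rotations).
The expected number of cycles of length `2r` equals
`(k(k-1)⋯(k-r+1))² / (r·k^(2r))`, which is at most `1/r`. -/
theorem expected_cycles_length_2r (k r : ℕ) [NeZero r] (hk : 1 ≤ k) (hr : 2 ≤ r) :
    (∑ w : (Fin k → Fin k) × (Fin k → Fin k),
        (Nat.card {p : (Fin r → Fin k) × (Fin r → Fin k) //
            Function.Injective p.1 ∧ Function.Injective p.2 ∧
            ∀ i : Fin r, w.1 (p.2 i) = p.1 (i + 1) ∧ w.2 (p.1 (i + 1)) = p.2 (i + 1)} : ℝ)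
          / r) /
        (Nat.card ((Fin k → Fin k) × (Fin k → Fin k)) : ℝ) =
      (∏ i ∈ Finset.range r, ((k : ℝ) - i)) ^ 2 / (r * (k : ℝ) ^ (2 * r)) ∧
    (∏ i ∈ Finset.range r, ((k : ℝ) - i)) ^ 2 / (r * (k : ℝ) ^ (2 * r)) ≤ 1 / r :=
  expected_cycles_length_2r_general k r
end

section
/- Let G be a graph with maximum degree Δ. Then for each m ≥ 1 and each vertex v of G, the number of subtrees of G with exactly m vertices containing v is at most (eΔ)^(m-1). -/
/-!
Root the tree at `v`, number its other vertices `1, …, m - 1`, and number the neighbours of every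
vertex of `G` by `1, …, Δ`. Each numbered vertex is described by the number of its parent and its
own number among the neighbours of that parent. Going down from the root, these descriptions
recover the numbered tree, so the `(m - 1)!` numberings of the trees give pairwise distinct
descriptions, of which there are at most `(m Δ) ^ (m - 1)`. Hence the count is at most
`m ^ (m - 1) Δ ^ (m - 1) / (m - 1)! ≤ (e Δ) ^ (m - 1)`, by `(1 + 1 / k) ^ k ≤ e`.
-/

open scoped Nat

theorem succ_pow_le_exp_pow_mul_factorial (n : ℕ) :
    ((n : ℝ) + 1) ^ n ≤ Real.exp 1 ^ n * n ! := by
  induction n with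
  | zero => simp
  | succ k ih =>
    have hstep : ((k : ℝ) + 1 + 1) ^ (k + 1) ≤ ((k : ℝ) + 1) ^ (k + 1) * Real.exp 1 :=
      calc ((k : ℝ) + 1 + 1) ^ (k + 1)
          = ((k : ℝ) + 1) ^ (k + 1) * (1 + ((k + 1 : ℕ) : ℝ)⁻¹) ^ (k + 1) := by
            rw [← mul_pow]; congr 1; push_cast; field_simp
        _ ≤ ((k : ℝ) + 1) ^ (k + 1) * Real.exp 1 := by
            gcongr; exact Real.one_add_inv_pow_le_exp
    calc (((k + 1 : ℕ) : ℝ) + 1) ^ (k + 1) ≤ ((k : ℝ) + 1) ^ k * (k + 1) * Real.exp 1 := by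
          push_cast; rw [← pow_succ]; exact hstep
      _ ≤ Real.exp 1 ^ k * k ! * (k + 1) * Real.exp 1 := by gcongr
      _ = Real.exp 1 ^ (k + 1) * (k + 1)! := by push_cast [Nat.factorial_succ]; ring

namespace SimpleGraph.IsTree

variable {W : Type*} {T : SimpleGraph W} (hT : T.IsTree) (r : W)

noncomputable def pathTo (u : W) : T.Walk u r := (hT.existsUnique_path u r).exists.choose

lemma isPath_pathTo (u : W) : (hT.pathTo r u).IsPath :=
  (hT.existsUnique_path u r).exists.choose_spec

lemma eq_pathTo {u : W} {p : T.Walk u r} (hp : p.IsPath) : p = hT.pathTo r u :=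
  (hT.existsUnique_path u r).unique hp (hT.isPath_pathTo r u)

noncomputable def parent (u : W) : W := (hT.pathTo r u).snd

noncomputable def depth (u : W) : ℕ := (hT.pathTo r u).length

lemma parent_self : hT.parent r r = r := by
  rw [parent, ← hT.eq_pathTo r Walk.IsPath.nil]
  rfl

variable {r}

lemma not_nil_pathTo {u : W} (hu : u ≠ r) : ¬(hT.pathTo r u).Nil := fun h => hu h.eq

lemma adj_parent {u : W} (hu : u ≠ r) : T.Adj u (hT.parent r u) :=
  Walk.adj_snd (hT.not_nil_pathTo hu)

lemma depth_parent_lt {u : W} (hu : u ≠ r) : hT.depth r (hT.parent r u) < hT.depth r u := by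
  have htail : (hT.pathTo r u).tail = hT.pathTo r (hT.parent r u) :=
    hT.eq_pathTo r (hT.isPath_pathTo r u).tail
  rw [depth, depth, ← htail, ← Walk.length_tail_add_one (hT.not_nil_pathTo hu)]
  exact Nat.lt_succ_self _

variable (r) in
lemma eq_parent_or_eq_parent_of_adj {a b : W} (h : T.Adj a b) :
    b = hT.parent r a ∨ a = hT.parent r b := by
  by_cases hb : b ∈ (hT.pathTo r a).support
  · exact .inl (hT.isAcyclic.eq_snd_of_adj_start (hT.isPath_pathTo r a) h hb)
  · right
    rw [parent, ← hT.eq_pathTo r ((hT.isPath_pathTo r a).cons hb (h := h.symm)), Walk.snd_cons]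

end SimpleGraph.IsTree

namespace SimpleGraph

variable {V : Type*} {G : SimpleGraph V}

lemma eq_of_port_eq {P : Type*} (port : ∀ p, G.neighborSet p ↪ P) {p p' a b : V}
    (ha : a ∈ G.neighborSet p) (hb : b ∈ G.neighborSet p') (hp : p = p')
    (h : port p ⟨a, ha⟩ = port p' ⟨b, hb⟩) : a = b := by
  subst hp
  exact congrArg Subtype.val ((port p).injective h)

def subtreesContaining (G : SimpleGraph V) (v : V) (m : ℕ) : Set G.Subgraph :=
  {H | v ∈ H.verts ∧ H.verts.ncard = m ∧ H.coe.IsTree}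

abbrev LabelledSubtree (G : SimpleGraph V) (v : V) (n : ℕ) :=
  Σ H : subtreesContaining G v (n + 1), Fin n ≃ {u : H.1.verts // u ≠ ⟨v, H.2.1⟩}

namespace LabelledSubtree

variable {v : V} {n : ℕ} (x : LabelledSubtree G v n)

abbrev subgraph : G.Subgraph := x.1.1

def root : x.subgraph.verts := ⟨v, x.1.2.1⟩

lemma isTree : x.subgraph.coe.IsTree := x.1.2.2.2

noncomputable def parent (u : x.subgraph.verts) : x.subgraph.verts := x.isTree.parent x.root u

lemma parent_root : x.parent x.root = x.root := x.isTree.parent_self x.root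

lemma adj_parent {u : x.subgraph.verts} (hu : u ≠ x.root) : G.Adj (x.parent u) u :=
  x.subgraph.adj_sub (x.isTree.adj_parent hu).symm

lemma ext_of_subgraph_eq {x y : LabelledSubtree G v n} (hH : x.subgraph = y.subgraph)
    (hlab : ∀ i, ((x.2 i : x.subgraph.verts) : V) = y.2 i) : x = y := by
  obtain ⟨⟨H, hH₁⟩, lab⟩ := x
  obtain ⟨⟨H', hH₂⟩, lab'⟩ := y
  obtain rfl : H = H' := hH
  congr
  exact Equiv.ext fun i => Subtype.ext (Subtype.ext (hlab i))

variable [DecidableEq V]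

def enum : Fin (n + 1) ≃ x.subgraph.verts :=
  (finSuccEquiv n).trans ((Equiv.optionCongr x.2).trans (Equiv.optionSubtypeNe x.root))

@[simp] lemma enum_zero : x.enum 0 = x.root := rfl

@[simp] lemma enum_succ (i : Fin n) : x.enum i.succ = x.2 i := rfl

variable {P : Type*} (port : ∀ p, G.neighborSet p ↪ P)

noncomputable def code (i : Fin n) : Fin (n + 1) × P :=
  (x.enum.symm (x.parent (x.2 i)), port (x.parent (x.2 i)) ⟨x.2 i, x.adj_parent (x.2 i).2⟩)

lemma parent_eq_enum_code (i : Fin n) : x.parent (x.2 i) = x.enum (x.code port i).1 := by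
  simp [code]

variable {x} {y : LabelledSubtree G v n}

lemma enum_eq_of_code_eq (h : x.code port = y.code port) (j : Fin (n + 1)) :
    (x.enum j : V) = y.enum j := by
  induction hd : x.isTree.depth x.root (x.enum j) using Nat.strong_induction_on generalizing j
    with | _ d ih =>
  induction j using Fin.cases with
  | zero => rfl
  | succ i =>
    have hcode := congrFun h i
    have hlt : x.isTree.depth x.root (x.enum (x.code port i).1) < d := by
      rw [← hd, ← parent_eq_enum_code, enum_succ]
      exact x.isTree.depth_parent_lt (x.2 i).2
    have hparent : (x.parent (x.2 i) : V) = y.parent (y.2 i) := by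
      rw [parent_eq_enum_code, parent_eq_enum_code, ← hcode]
      exact ih _ hlt _ rfl
    exact eq_of_port_eq port _ _ hparent (congrArg Prod.snd hcode)

lemma parent_enum_eq_of_code_eq (h : x.code port = y.code port) (j : Fin (n + 1)) :
    (x.parent (x.enum j) : V) = y.parent (y.enum j) := by
  induction j using Fin.cases with
  | zero => rw [enum_zero, enum_zero, parent_root, parent_root]; rfl
  | succ i =>
    rw [enum_succ, enum_succ, parent_eq_enum_code, parent_eq_enum_code, h,
      enum_eq_of_code_eq port h]

lemma subgraph_le_of_enum_eq (henum : ∀ j, (x.enum j : V) = y.enum j)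
    (hparent : ∀ j, (x.parent (x.enum j) : V) = y.parent (y.enum j)) :
    x.subgraph ≤ y.subgraph := by
  have hverts (u : x.subgraph.verts) : (u : V) ∈ y.subgraph.verts := by
    rw [← x.enum.apply_symm_apply u, henum]
    exact (y.enum _).2
  have hadj (u : x.subgraph.verts) (hu : x.subgraph.Adj u (x.parent u)) :
      y.subgraph.Adj u (x.parent u) := by
    have hne : u ≠ x.root := by
      rintro rfl
      exact hu.ne (congrArg Subtype.val x.parent_root.symm)
    rw [← x.enum.apply_symm_apply u, henum, hparent]
    refine y.isTree.adj_parent fun hroot => hne ?_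
    rw [← x.enum.apply_symm_apply u]
    exact Subtype.ext ((henum _).trans (congrArg Subtype.val hroot))
  refine ⟨fun a ha => hverts ⟨a, ha⟩, fun a b hab => ?_⟩
  obtain ⟨u, rfl⟩ : ∃ u : x.subgraph.verts, (u : V) = a :=
    ⟨⟨a, x.subgraph.edge_vert hab⟩, rfl⟩
  obtain ⟨w, rfl⟩ : ∃ w : x.subgraph.verts, (w : V) = b :=
    ⟨⟨b, x.subgraph.edge_vert hab.symm⟩, rfl⟩
  rcases x.isTree.eq_parent_or_eq_parent_of_adj x.root (show x.subgraph.coe.Adj u w from hab)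
    with rfl | rfl
  · exact hadj u hab
  · exact (hadj w hab.symm).symm

theorem code_injective : Function.Injective fun x : LabelledSubtree G v n => x.code port := by
  intro x y h
  have henum := enum_eq_of_code_eq port h
  have hparent := parent_enum_eq_of_code_eq port h
  refine ext_of_subgraph_eq (le_antisymm (subgraph_le_of_enum_eq henum hparent)
    (subgraph_le_of_enum_eq (fun j => (henum j).symm) fun j => (hparent j).symm))
    fun i => henum i.succ

end LabelledSubtree

lemma natCard_labelledSubtree [Finite V] (v : V) (n : ℕ) :
    Nat.card (LabelledSubtree G v n) = (subtreesContaining G v (n + 1)).ncard * n ! := by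
  have := Fintype.ofFinite (subtreesContaining G v (n + 1))
  have hfiber (H : subtreesContaining G v (n + 1)) :
      Nat.card (Fin n ≃ {u : H.1.verts // u ≠ ⟨v, H.2.1⟩}) = n ! := by
    classical
    have hcard : Nat.card {u : H.1.verts // u ≠ ⟨v, H.2.1⟩} = n := by
      have hoption := Nat.card_congr (Equiv.optionSubtypeNe (⟨v, H.2.1⟩ : H.1.verts))
      have hverts : H.1.verts.ncard = n + 1 := H.2.2.1
      rw [Finite.card_option, Nat.card_coe_set_eq] at hoption
      exact Nat.add_right_cancel (hoption.trans hverts)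
    rw [Nat.card_congr ((Finite.equivFinOfCardEq hcard).symm.equivCongr (Equiv.refl _)),
      Nat.card_perm, hcard]
  rw [Nat.card_sigma, Finset.sum_congr rfl fun H _ => hfiber H, Finset.sum_const,
    Finset.card_univ, smul_eq_mul, ← Nat.card_eq_fintype_card, Nat.card_coe_set_eq]

theorem ncard_subtreesContaining_mul_factorial_le [Fintype V] [DecidableRel G.Adj] {Δ : ℕ}
    (hΔ : ∀ w, G.degree w ≤ Δ) (v : V) (n : ℕ) :
    (subtreesContaining G v (n + 1)).ncard * n ! ≤ ((n + 1) * Δ) ^ n := by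
  classical
  have port (p : V) : G.neighborSet p ↪ Fin Δ :=
    (Function.Embedding.nonempty_of_card_le <| by
      rw [Fintype.card_fin, card_neighborSet_eq_degree]; exact hΔ p).some
  rw [← natCard_labelledSubtree]
  calc Nat.card (LabelledSubtree G v n) ≤ Nat.card (Fin n → Fin (n + 1) × Fin Δ) :=
        Nat.card_le_card_of_injective _ (LabelledSubtree.code_injective port)
    _ = ((n + 1) * Δ) ^ n := by simp

end SimpleGraph

/-- If `G` is a graph with maximum degree `Δ`, then for each `m ≥ 1` and each vertex
`v`, the number of subtrees of `G` (subgraphs which are trees) with exactly `m`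
vertices containing `v` is at most `(eΔ)^(m-1)`. -/
theorem trees_containing_vertex_bound {V : Type*} [Fintype V]
    (G : SimpleGraph V) [DecidableRel G.Adj] (Δ : ℕ) (hΔ : ∀ w : V, G.degree w ≤ Δ)
    (m : ℕ) (hm : 1 ≤ m) (v : V) :
    (Set.ncard {H : G.Subgraph | v ∈ H.verts ∧ H.verts.ncard = m ∧ H.coe.IsTree} : ℝ) ≤
      (Real.exp 1 * Δ) ^ (m - 1) := by
  obtain ⟨n, rfl⟩ := Nat.exists_eq_add_of_le' hm
  have hcount : ((G.subtreesContaining v (n + 1)).ncard * n ! : ℝ) ≤ ((n + 1) * Δ) ^ n := by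
    exact_mod_cast SimpleGraph.ncard_subtreesContaining_mul_factorial_le hΔ v n
  rw [Nat.add_sub_cancel, ← mul_le_mul_iff_left₀ (by positivity : (0 : ℝ) < n !)]
  calc _ ≤ ((n + 1 : ℝ) ^ n) * Δ ^ n := by rw [← mul_pow]; exact hcount
    _ ≤ (Real.exp 1 ^ n * n !) * Δ ^ n := by gcongr; exact succ_pow_le_exp_pow_mul_factorial n
    _ = (Real.exp 1 * Δ) ^ n * n ! := by ring
end
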